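/- arXiv:2301.04394 — 5 statements merged into one kernel-verified Lean document; each statement's English description precedes it below -/
import Mathlib

section
/- Let (Θ,p) and (Θ,q) be two non-flat frameworks of a (d+1)-uniform hypergraph on n vertices in ℝ^d. Then (Θ,p) and (Θ,q) are congruent (signed volumes agree for every (d+1)-subset of vertices) if and only if there exists a single d-volume preserving affine transformation T of ℝ^d with T(p(i)) = q(i) for all vertices i. -/
/-- The signed `d`-volume (times `d!`) of the `d`-simplex on the points
`x 0, …, x d ∈ ℝ^d`: the determinant of the `(d+1) × (d+1)` matrix whose
`j`-th column is the homogeneous coordinate vector `(1, x j)`. -/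
noncomputable def vol (d : ℕ) (x : Fin (d + 1) → Fin d → ℝ) : ℝ :=
  (Matrix.of fun i j => (Fin.cases 1 (fun k => x j k) i : ℝ) :
    Matrix (Fin (d + 1)) (Fin (d + 1)) ℝ).det

/-- The homogeneous matrix whose determinant is `vol`. -/
noncomputable def homMat (d : ℕ) (x : Fin (d + 1) → Fin d → ℝ) :
    Matrix (Fin (d + 1)) (Fin (d + 1)) ℝ :=
  Matrix.of fun i j => (Fin.cases 1 (fun k => x j k) i : ℝ)

lemma vol_eq_det (d : ℕ) (x : Fin (d + 1) → Fin d → ℝ) :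
    vol d x = (homMat d x).det := rfl

lemma homMat_zero (d : ℕ) (x : Fin (d + 1) → Fin d → ℝ) (j : Fin (d + 1)) :
    homMat d x 0 j = 1 := rfl

lemma homMat_succ (d : ℕ) (x : Fin (d + 1) → Fin d → ℝ) (k : Fin d) (j : Fin (d + 1)) :
    homMat d x k.succ j = x j k := rfl

/-- Determinant of a matrix whose first row is `(1,0,…,0)`. -/
lemma det_eq_of_row0 {d : ℕ} (C : Matrix (Fin (d + 1)) (Fin (d + 1)) ℝ)
    (h0 : C 0 0 = 1) (hs : ∀ j : Fin d, C 0 j.succ = 0) :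
    C.det = (C.submatrix Fin.succ Fin.succ).det := by
  rw [Matrix.det_succ_row_zero, Fin.sum_univ_succ]
  simp [h0, hs, Fin.succAbove_zero]

/-- Two non-flat frameworks `(Θ,p)`, `(Θ,q)` of a `(d+1)`-uniform hypergraph on
`n` vertices in `ℝ^d` (non-flat: some `(d+1)`-tuple of points has nonzero
signed volume, i.e. the points affinely span `ℝ^d`) are congruent — the signed
volumes agree on every `(d+1)`-tuple of vertices — if and only if there is a
single `d`-volume preserving affine transformation `T : x ↦ A x + b`,
`det A = 1`, with `T (p i) = q i` for all vertices `i`. -/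
theorem congruent_iff_single_transform (d n : ℕ)
    (p q : Fin n → Fin d → ℝ)
    (hp : ∃ t : Fin (d + 1) → Fin n, vol d (p ∘ t) ≠ 0)
    (hq : ∃ t : Fin (d + 1) → Fin n, vol d (q ∘ t) ≠ 0) :
    (∀ t : Fin (d + 1) → Fin n, vol d (p ∘ t) = vol d (q ∘ t)) ↔
      ∃ (A : Matrix (Fin d) (Fin d) ℝ) (b : Fin d → ℝ), A.det = 1 ∧
        ∀ i : Fin n, A.mulVec (p i) + b = q i := by
  constructor
  · intro hcong
    obtain ⟨t, hpt⟩ := hp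
    set P : Matrix (Fin (d + 1)) (Fin (d + 1)) ℝ := homMat d (p ∘ t) with hP
    set Q : Matrix (Fin (d + 1)) (Fin (d + 1)) ℝ := homMat d (q ∘ t) with hQ
    have hPdet : P.det ≠ 0 := by rwa [vol_eq_det] at hpt
    have hdetPQ : Q.det = P.det := by
      rw [← vol_eq_det, ← vol_eq_det]; exact (hcong t).symm
    have hPu : IsUnit P.det := isUnit_iff_ne_zero.mpr hPdet
    -- homogeneous coordinate vectors
    set yp : Fin n → Fin (d + 1) → ℝ :=
      fun i k => (Fin.cases 1 (fun l => p i l) k : ℝ) with hyp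
    set yq : Fin n → Fin (d + 1) → ℝ :=
      fun i k => (Fin.cases 1 (fun l => q i l) k : ℝ) with hyq
    -- Cramer's rule values agree
    have hcram : ∀ i : Fin n, Matrix.cramer P (yp i) = Matrix.cramer Q (yq i) := by
      intro i
      funext j
      rw [Matrix.cramer_apply, Matrix.cramer_apply]
      have hup : P.updateCol j (yp i) = homMat d (p ∘ Function.update t j i) := by
        ext a b
        simp only [Matrix.updateCol_apply, homMat, Matrix.of_apply, Function.comp,
          Function.update_apply]
        by_cases h : b = j <;> simp [h, hyp] <;> rfl
      have huq : Q.updateCol j (yq i) = homMat d (q ∘ Function.update t j i) := by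
        ext a b
        simp only [Matrix.updateCol_apply, homMat, Matrix.of_apply, Function.comp,
          Function.update_apply]
        by_cases h : b = j <;> simp [h, hyq] <;> rfl
      rw [hup, huq, ← vol_eq_det, ← vol_eq_det]
      exact hcong (Function.update t j i)
    set C : Matrix (Fin (d + 1)) (Fin (d + 1)) ℝ := Q * P⁻¹ with hC
    -- C maps homogeneous p-vectors to homogeneous q-vectors
    have hmul : ∀ i : Fin n, C.mulVec (yp i) = yq i := by
      intro i
      have h1 : P⁻¹.mulVec (yp i) = P.det⁻¹ • Matrix.cramer P (yp i) := by
        rw [Matrix.inv_def, Matrix.cramer_eq_adjugate_mulVec, Matrix.smul_mulVec,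
          Ring.inverse_eq_inv']
      calc C.mulVec (yp i) = Q.mulVec (P⁻¹.mulVec (yp i)) := (Matrix.mulVec_mulVec _ _ _).symm
        _ = Q.mulVec (P.det⁻¹ • Matrix.cramer Q (yq i)) := by rw [h1, hcram i]
        _ = P.det⁻¹ • Q.mulVec (Matrix.cramer Q (yq i)) := by
            rw [Matrix.mulVec_smul]
        _ = P.det⁻¹ • (Q.det • yq i) := by rw [Matrix.mulVec_cramer]
        _ = yq i := by rw [hdetPQ, smul_smul, inv_mul_cancel₀ hPdet, one_smul]
    -- First row of C is (1,0,…,0)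
    have hCP : C * P = Q := by
      rw [hC, Matrix.mul_assoc, Matrix.nonsing_inv_mul P hPu, Matrix.mul_one]
    have hrow : (fun j => C 0 j) = Pi.single (0 : Fin (d + 1)) (1 : ℝ) := by
      have hinj : ∀ v w : Fin (d + 1) → ℝ,
          Matrix.vecMul v P = Matrix.vecMul w P → v = w := by
        intro v w h
        have h2 := congrArg (fun u => Matrix.vecMul u P⁻¹) h
        simpa [Matrix.vecMul_vecMul, Matrix.mul_nonsing_inv P hPu, Matrix.vecMul_one] using h2
      apply hinj
      funext j
      have h1 : Matrix.vecMul (fun j => C 0 j) P j = (C * P) 0 j := by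
        simp [Matrix.vecMul, Matrix.mul_apply, dotProduct]
      have h2 : Matrix.vecMul (Pi.single (0 : Fin (d + 1)) (1 : ℝ)) P j = P 0 j := by
        simp [Matrix.vecMul, dotProduct, Pi.single_apply]
      rw [h1, h2, hCP]
      rfl
    have hC00 : C 0 0 = 1 := by
      have := congrFun hrow 0; simpa using this
    have hC0s : ∀ j : Fin d, C 0 j.succ = 0 := by
      intro j
      have := congrFun hrow j.succ
      simpa [Pi.single_apply, Fin.succ_ne_zero] using this
    refine ⟨C.submatrix Fin.succ Fin.succ, fun k => C k.succ 0, ?_, ?_⟩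
    · rw [← det_eq_of_row0 C hC00 hC0s, hC, Matrix.det_mul, Matrix.det_nonsing_inv,
        Ring.inverse_eq_inv', hdetPQ, mul_inv_cancel₀ hPdet]
    · intro i
      funext k
      have h := congrFun (hmul i) k.succ
      have hexp : C.mulVec (yp i) k.succ
          = (∑ j : Fin d, C k.succ j.succ * p i j) + C k.succ 0 := by
        rw [Matrix.mulVec, dotProduct, Fin.sum_univ_succ]
        simp [hyp]
        ring
      rw [hexp] at h
      simpa [Matrix.mulVec, dotProduct, hyq] using h
  · rintro ⟨A, b, hA, hT⟩ t
    -- the (d+1)×(d+1) homogeneous form of the affine map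
    set C : Matrix (Fin (d + 1)) (Fin (d + 1)) ℝ :=
      Matrix.of fun i j =>
        (Fin.cases (Fin.cases 1 (fun _ => 0) j)
          (fun i' => Fin.cases (b i') (fun j' => A i' j') j) i : ℝ) with hCdef
    have hC00 : C 0 0 = 1 := rfl
    have hC0s : ∀ j : Fin d, C 0 j.succ = 0 := fun j => rfl
    have hsub : C.submatrix Fin.succ Fin.succ = A := by
      ext i j; rfl
    have hCQ : homMat d (q ∘ t) = C * homMat d (p ∘ t) := by
      ext i j
      rw [Matrix.mul_apply, Fin.sum_univ_succ]
      induction i using Fin.cases with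
      | zero =>
        simp [hC0s, hC00, homMat]
      | succ i' =>
        have := congrFun (hT (t j)) i'
        simp only [Pi.add_apply, Matrix.mulVec, dotProduct] at this
        simp only [homMat, Matrix.of_apply, Function.comp]
        rw [Fin.cases_succ]
        rw [← this]
        have h0 : C i'.succ 0 = b i' := rfl
        have hsucc : ∀ k : Fin d, C i'.succ k.succ = A i' k := fun k => rfl
        simp [h0, hsucc, homMat_succ]
        ring
    rw [vol_eq_det, vol_eq_det, hCQ, Matrix.det_mul, det_eq_of_row0 C hC00 hC0s, hsub, hA,
      one_mul]
end

section
/- For every d ≥ 1 and n ≥ d+1 there exists a (d+1)-uniform hypergraph Θ on n vertices with exactly dn − (d²+d−1) hyperedges such that every pair of equivalent frameworks of Θ in ℝ^d (with the first hyperedge realized with nonzero volume) are congruent; i.e. Θ is globally signed d-volume rigid. The hypergraph is built from a single hyperedge by iterated (d+1)-vertex splits (simplex subdivisions). -/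
namespace RigidAux

noncomputable def hv {d n : ℕ} (p : Fin n → Fin d → ℝ) (v : Fin n) : Fin (d + 1) → ℝ :=
  fun i => Fin.cases 1 (fun k => p v k) i

@[simp] lemma hv_zero {d n : ℕ} (p : Fin n → Fin d → ℝ) (v : Fin n) : hv p v 0 = 1 := rfl

lemma vol_comp {d n : ℕ} (p : Fin n → Fin d → ℝ) (t : Fin (d + 1) → Fin n) :
    vol d (p ∘ t) = (Matrix.of fun i j => hv p (t j) i).det := rfl

end RigidAux

open RigidAux Matrix

/-- For every `d ≥ 1` and `n ≥ d+1` there is a `(d+1)`-uniform hypergraph on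
`n` vertices (built from a single hyperedge `h₀` by iterated `(d+1)`-vertex
splits / simplex subdivisions) with exactly `dn − (d²+d−1)` hyperedges that is
globally signed `d`-volume rigid: any two equivalent frameworks in `ℝ^d`, the
first of which realizes the hyperedge `h₀` with nonzero volume, are
congruent (all `(d+1)`-tuples of vertices have equal signed volumes). -/
theorem exists_globally_rigid_minimally_rigid_hypergraph (d n : ℕ)
    (hd : 1 ≤ d) (hn : d + 1 ≤ n) :
    ∃ (H : Finset (Fin (d + 1) → Fin n)) (h₀ : Fin (d + 1) → Fin n),
      h₀ ∈ H ∧ (H.card : ℤ) = d * n - (d ^ 2 + d - 1) ∧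
      ∀ p q : Fin n → Fin d → ℝ, vol d (p ∘ h₀) ≠ 0 →
        (∀ h ∈ H, vol d (p ∘ h) = vol d (q ∘ h)) →
        ∀ t : Fin (d + 1) → Fin n, vol d (p ∘ t) = vol d (q ∘ t) := by
  classical
  set h₀ : Fin (d + 1) → Fin n := fun i => Fin.castLE hn i with hh₀
  have hval : ∀ i : Fin (d + 1), (h₀ i).val = i.val := fun i => rfl
  set S : Finset (Fin n) := Finset.univ.filter (fun w => d + 1 ≤ w.val) with hS
  set J : Finset (Fin (d + 1)) := Finset.univ.filter (fun j => j ≠ 0) with hJ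
  set E : Finset (Fin (d + 1) → Fin n) :=
    (S ×ˢ J).image (fun wj => Function.update h₀ wj.2 wj.1) with hE
  -- basic membership facts
  have hSmem : ∀ w : Fin n, w ∈ S ↔ d + 1 ≤ w.val := by
    intro w; simp [hS]
  have hupdval : ∀ (w : Fin n) (j j' : Fin (d + 1)), j' ≠ j →
      Function.update h₀ j w j' = h₀ j' := by
    intro w j j' hj'; exact Function.update_of_ne hj' _ _
  have hnotmem : h₀ ∉ E := by
    intro hmem
    rw [hE, Finset.mem_image] at hmem
    obtain ⟨⟨w, j⟩, hwj, hupd⟩ := hmem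
    rw [Finset.mem_product] at hwj
    have hw : d + 1 ≤ w.val := (hSmem w).mp hwj.1
    have : Function.update h₀ j w j = h₀ j := by rw [hupd]
    rw [Function.update_self] at this
    have := congrArg Fin.val this
    rw [hval] at this
    omega
  have hinj : Set.InjOn (fun wj : Fin n × Fin (d + 1) => Function.update h₀ wj.2 wj.1)
      ((S ×ˢ J) : Finset (Fin n × Fin (d + 1))) := by
    rintro ⟨w, j⟩ hwj ⟨w', j'⟩ hwj' hupd
    simp only [Finset.coe_mem, Finset.mem_coe, Finset.mem_product] at hwj hwj'
    have hw : d + 1 ≤ w.val := (hSmem w).mp hwj.1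
    have hw' : d + 1 ≤ w'.val := (hSmem w').mp hwj'.1
    have hjj : j = j' := by
      by_contra hne
      have h1 : Function.update h₀ j w j = Function.update h₀ j' w' j := congrFun hupd j
      rw [Function.update_self, hupdval w' j' j hne] at h1
      have := congrArg Fin.val h1
      rw [hval] at this
      omega
    subst hjj
    have h1 : Function.update h₀ j w j = Function.update h₀ j w' j := congrFun hupd j
    rw [Function.update_self, Function.update_self] at h1
    exact Prod.ext h1 rfl
  refine ⟨insert h₀ E, h₀, Finset.mem_insert_self _ _, ?_, ?_⟩
  · -- cardinality
    have hcard : (insert h₀ E).card = E.card + 1 := Finset.card_insert_of_notMem hnotmem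
    have hEcard : E.card = (S ×ˢ J).card := Finset.card_image_of_injOn hinj
    have hScard : S.card = n - (d + 1) := by
      have himg : S.image Fin.val = Finset.Ico (d + 1) n := by
        ext a
        simp only [Finset.mem_image, Finset.mem_Ico, hS, Finset.mem_filter,
          Finset.mem_univ, true_and]
        constructor
        · rintro ⟨w, hw, rfl⟩; exact ⟨hw, w.isLt⟩
        · rintro ⟨h1, h2⟩; exact ⟨⟨a, h2⟩, h1, rfl⟩
      have := Finset.card_image_of_injective S Fin.val_injective
      rw [himg, Nat.card_Ico] at this
      omega
    have hJcard : J.card = d := by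
      have : J = Finset.univ.erase 0 := by
        ext j; simp [hJ]
      rw [this, Finset.card_erase_of_mem (Finset.mem_univ _), Finset.card_univ, Fintype.card_fin]
      omega
    rw [hcard, hEcard, Finset.card_product, hScard, hJcard]
    have hcast : ((n - (d + 1) : ℕ) : ℤ) = (n : ℤ) - (d + 1) := by
      rw [Nat.cast_sub hn]; push_cast; ring
    push_cast [hcast]
    ring
  · -- rigidity
    intro p q hp0 heq t
    set Bp : Matrix (Fin (d + 1)) (Fin (d + 1)) ℝ := Matrix.of fun i j => hv p (h₀ j) i with hBp
    set Bq : Matrix (Fin (d + 1)) (Fin (d + 1)) ℝ := Matrix.of fun i j => hv q (h₀ j) i with hBq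
    have hdetp : Bp.det = vol d (p ∘ h₀) := (vol_comp p h₀).symm
    have hdetq : Bq.det = vol d (q ∘ h₀) := (vol_comp q h₀).symm
    have hpq0 : vol d (p ∘ h₀) = vol d (q ∘ h₀) := heq h₀ (Finset.mem_insert_self _ _)
    have hdetpq : Bp.det = Bq.det := by rw [hdetp, hdetq, hpq0]
    have hdp0 : Bp.det ≠ 0 := by rw [hdetp]; exact hp0
    have hdq0 : Bq.det ≠ 0 := by rw [← hdetpq]; exact hdp0
    have hup : IsUnit Bp.det := isUnit_iff_ne_zero.mpr hdp0
    have huq : IsUnit Bq.det := isUnit_iff_ne_zero.mpr hdq0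
    set lp : Fin n → Fin (d + 1) → ℝ := fun v => Bp⁻¹ *ᵥ hv p v with hlp
    set lq : Fin n → Fin (d + 1) → ℝ := fun v => Bq⁻¹ *ᵥ hv q v with hlq
    have key1p : ∀ v, Bp *ᵥ lp v = hv p v := by
      intro v
      rw [hlp, Matrix.mulVec_mulVec, Matrix.mul_nonsing_inv _ hup, Matrix.one_mulVec]
    have key1q : ∀ v, Bq *ᵥ lq v = hv q v := by
      intro v
      rw [hlq, Matrix.mulVec_mulVec, Matrix.mul_nonsing_inv _ huq, Matrix.one_mulVec]
    -- update column identity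
    have hupdcol : ∀ (r : Fin n → Fin d → ℝ) (B : Matrix (Fin (d+1)) (Fin (d+1)) ℝ)
        (hB : B = Matrix.of fun i j => hv r (h₀ j) i) (v : Fin n) (j : Fin (d + 1)),
        B.updateCol j (hv r v) = Matrix.of fun i j' => hv r (Function.update h₀ j v j') i := by
      intro r B hB v j
      ext i j'
      rw [Matrix.updateCol_apply]
      by_cases hj : j' = j
      · subst hj; simp [Function.update_self]
      · rw [if_neg hj, hB]
        simp [Matrix.of_apply, Function.update_of_ne hj]
    -- Cramer
    have cramerp : ∀ (v : Fin n) (j : Fin (d + 1)),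
        Bp.det * lp v j = vol d (p ∘ Function.update h₀ j v) := by
      intro v j
      have h2 : Bp.det • lp v = Matrix.cramer Bp (hv p v) := by
        have h := congrArg (fun x => Bp⁻¹ *ᵥ x) (Matrix.mulVec_cramer Bp (hv p v))
        simp only [Matrix.mulVec_mulVec, Matrix.nonsing_inv_mul _ hup, Matrix.one_mulVec,
          Matrix.mulVec_smul] at h
        rw [hlp]
        exact h.symm
      have h3 := congrFun h2 j
      simp only [Pi.smul_apply, smul_eq_mul] at h3
      rw [h3, Matrix.cramer_apply, hupdcol p Bp hBp v j, vol_comp]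
    have cramerq : ∀ (v : Fin n) (j : Fin (d + 1)),
        Bq.det * lq v j = vol d (q ∘ Function.update h₀ j v) := by
      intro v j
      have h2 : Bq.det • lq v = Matrix.cramer Bq (hv q v) := by
        have h := congrArg (fun x => Bq⁻¹ *ᵥ x) (Matrix.mulVec_cramer Bq (hv q v))
        simp only [Matrix.mulVec_mulVec, Matrix.nonsing_inv_mul _ huq, Matrix.one_mulVec,
          Matrix.mulVec_smul] at h
        rw [hlq]
        exact h.symm
      have h3 := congrFun h2 j
      simp only [Pi.smul_apply, smul_eq_mul] at h3
      rw [h3, Matrix.cramer_apply, hupdcol q Bq hBq v j, vol_comp]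
    -- volumes on split edges agree
    have hvols : ∀ (v : Fin n) (j : Fin (d + 1)), j ≠ 0 →
        vol d (p ∘ Function.update h₀ j v) = vol d (q ∘ Function.update h₀ j v) := by
      intro v j hj
      by_cases hv' : d + 1 ≤ v.val
      · -- edge of the hypergraph
        apply heq
        apply Finset.mem_insert_of_mem
        rw [hE, Finset.mem_image]
        refine ⟨(v, j), Finset.mem_product.mpr ⟨(hSmem v).mpr hv', ?_⟩, rfl⟩
        simp [hJ, hj]
      · -- v is a base vertex
        push_neg at hv'
        set j₀ : Fin (d + 1) := ⟨v.val, hv'⟩ with hj₀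
        have hvj₀ : h₀ j₀ = v := Fin.ext rfl
        by_cases hjj : j = j₀
        · subst hjj
          rw [← hvj₀, Function.update_eq_self]
          exact heq h₀ (Finset.mem_insert_self _ _)
        · have hzero : ∀ (r : Fin n → Fin d → ℝ),
              vol d (r ∘ Function.update h₀ j v) = 0 := by
            intro r
            rw [vol_comp]
            apply Matrix.det_zero_of_column_eq hjj
            intro k
            have h1 : Function.update h₀ j v j = v := Function.update_self _ _ _
            have h2 : Function.update h₀ j v j₀ = v := by
              rw [Function.update_of_ne (fun h => hjj h.symm), hvj₀]
            simp [Matrix.of_apply, h1, h2]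
          rw [hzero p, hzero q]
    -- the barycentric coordinates agree for j ≠ 0
    have hlamne : ∀ (v : Fin n) (j : Fin (d + 1)), j ≠ 0 → lp v j = lq v j := by
      intro v j hj
      have h1 : Bp.det * lp v j = Bp.det * lq v j := by
        rw [cramerp v j, hvols v j hj, hdetpq, cramerq v j]
      exact mul_left_cancel₀ hdp0 h1
    -- row sums are 1
    have hsump : ∀ v, ∑ j, lp v j = 1 := by
      intro v
      have := congrFun (key1p v) 0
      simp only [Matrix.mulVec, dotProduct, hBp, Matrix.of_apply, hv_zero, one_mul] at this
      rw [← this]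
    have hsumq : ∀ v, ∑ j, lq v j = 1 := by
      intro v
      have := congrFun (key1q v) 0
      simp only [Matrix.mulVec, dotProduct, hBq, Matrix.of_apply, hv_zero, one_mul] at this
      rw [← this]
    -- all coordinates agree
    have hlam : ∀ v, lp v = lq v := by
      intro v
      funext j
      by_cases hj : j = 0
      · subst hj
        have e1 : lp v 0 + ∑ j ∈ Finset.univ.erase 0, lp v j = 1 := by
          rw [Finset.add_sum_erase _ _ (Finset.mem_univ 0)]; exact hsump v
        have e2 : lq v 0 + ∑ j ∈ Finset.univ.erase 0, lq v j = 1 := by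
          rw [Finset.add_sum_erase _ _ (Finset.mem_univ 0)]; exact hsumq v
        have e3 : ∑ j ∈ Finset.univ.erase 0, lp v j = ∑ j ∈ Finset.univ.erase 0, lq v j :=
          Finset.sum_congr rfl fun j hj => hlamne v j (Finset.mem_erase.mp hj).1
        linarith
      · exact hlamne v j hj
    -- the linear map carrying p to q
    have hcol : ∀ v, (Bq * Bp⁻¹) *ᵥ hv p v = hv q v := by
      intro v
      rw [← Matrix.mulVec_mulVec]
      show Bq *ᵥ lp v = _
      rw [hlam v]
      exact key1q v
    have hC : (Matrix.of fun i j => hv q (t j) i) =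
        (Bq * Bp⁻¹) * (Matrix.of fun i j => hv p (t j) i) := by
      ext i j
      have h := congrFun (hcol (t j)) i
      rw [Matrix.mul_apply]
      simp only [Matrix.mulVec, dotProduct, Matrix.of_apply] at h ⊢
      exact h.symm
    have hdm : (Bq * Bp⁻¹).det = 1 := by
      rw [Matrix.det_mul, Matrix.det_nonsing_inv, Ring.inverse_eq_inv', ← hdetpq,
        mul_inv_cancel₀ hdp0]
    rw [vol_comp p t, vol_comp q t, hC, Matrix.det_mul, hdm, one_mul]
end

section
/- For an even number of vertices n, any generic framework (B_{n−2}, p) of the (n−2)-gonal bipyramid in ℝ² has at least two congruence classes: there exists a framework (B_{n−2}, q) equivalent to (B_{n−2}, p) but not congruent to it. This follows because the defining polynomial f(p)(t) of the pinned configuration space has even degree n − 4 and satisfies f(p)(0) = 0, hence has another real root. -/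
/-- A configuration `p` of `n` points in `ℝ²` is generic if no nonzero
polynomial with rational coefficients vanishes at its coordinates. -/
def Generic (n : ℕ) (p : Fin n → Fin 2 → ℝ) : Prop :=
  ∀ f : MvPolynomial (Fin n × Fin 2) ℚ, f ≠ 0 →
    MvPolynomial.aeval (fun v => p v.1 v.2) f ≠ 0

open Fin.NatCast in
/-- The hyperedges of the `(n−2)`-gonal bipyramid `B_{n−2}` on `n = m + 5`
vertices: apexes `0` and `n−1 = m+4`, equatorial cycle `1, …, n−2 = m+3`, with
triangles `{0, i, i+1}` and `{i, i+1, n−1}` around the equator (indices cyclic,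
so also `{0, m+3, 1}` and `{m+3, 1, m+4}`). -/
def bipyramidEdges (m : ℕ) : Set (Fin 3 → Fin (m + 5)) :=
  {h | ∃ i : ℕ, 1 ≤ i ∧ i ≤ m + 2 ∧
      (h = ![(0 : Fin (m + 5)), (i : Fin (m + 5)), ((i + 1 : ℕ) : Fin (m + 5))] ∨
       h = ![(i : Fin (m + 5)), ((i + 1 : ℕ) : Fin (m + 5)),
              ((m + 4 : ℕ) : Fin (m + 5))])} ∪
  {h | h = ![(0 : Fin (m + 5)), ((m + 3 : ℕ) : Fin (m + 5)), (1 : Fin (m + 5))] ∨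
       h = ![((m + 3 : ℕ) : Fin (m + 5)), (1 : Fin (m + 5)),
              ((m + 4 : ℕ) : Fin (m + 5))]}


/-!
Keep both apexes `a = p 0`, `b = p (n-1)` fixed and move every equatorial vertex `u_j` to
`u_j + s • J v + t_j • v`, where `v = b - a` and `J` is the rotation by a right angle. In the
coordinates `x_j = cross v (u_j - a)`, `y_j = ⟪v, u_j - a⟫` and with `N = ‖v‖²`, both triangles
`{a, u_j, u_{j+1}}` and `{u_j, u_{j+1}, b}` change their signed area by
`t_j (N s + x_{j+1}) - t_{j+1} (N s + x_j) - s (y_{j+1} - y_j)`, while `{a, b, u_0}` changes by `s N`.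
When all `N s + x_j` are nonzero, the cyclic system asking these changes to vanish is solvable in
`t` iff `G(s) = ∑_j (y_{j+1} - y_j) ∏_{k ≠ j, j+1} (N s + x_k)` vanishes. The paper's polynomial is
`f(s) = N s G(s) = ∑_j (y_j x_{j+1} - y_{j+1} x_j) ∏_{k ≠ j, j+1} (N s + x_k)`, of degree `n - 4`,
so `G` has odd degree `n - 5` and a real root `s`. For generic `p` this root is nonzero and keeps
every `N s + x_j` nonzero: the polynomials in the coordinates of `p` expressing these conditions
are nonzero because they do not vanish at explicit configurations.
-/

open Finset Polynomial

theorem Real.exists_isRoot_of_odd_natDegree {f : ℝ[X]} (hf : Odd f.natDegree) :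
    ∃ x, f.IsRoot x := by
  have hf0 : f ≠ 0 := by rintro rfl; simp at hf
  -- `f(x) f(-x)` has negative leading coefficient and is a square at `0`
  set g := f * f.comp (-X)
  have hg_lead : g.leadingCoeff = -f.leadingCoeff ^ 2 := by
    rw [leadingCoeff_mul, leadingCoeff_comp (by simp), leadingCoeff_neg, leadingCoeff_X,
      hf.neg_one_pow]
    ring
  have hg_deg : 0 < g.degree := by
    have hg_lead_ne : f.leadingCoeff * (f.comp (-X)).leadingCoeff ≠ 0 := by
      rw [← leadingCoeff_mul, hg_lead]; simpa using hf0
    rw [← natDegree_pos_iff_degree_pos, natDegree_mul' hg_lead_ne]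
    simp only [natDegree_comp, natDegree_neg, natDegree_X, mul_one]
    exact hf.pos.trans_le (Nat.le_add_right _ _)
  obtain ⟨b, hb⟩ := ((tendsto_atBot_of_leadingCoeff_nonpos g hg_deg
    (by rw [hg_lead]; nlinarith)).eventually_le_atBot 0).exists_forall_of_atTop
  obtain ⟨y, -, hy⟩ := intermediate_value_Icc' (le_max_right b 0) g.continuous.continuousOn
    ⟨hb _ (le_max_left b 0), by simpa [g] using mul_self_nonneg (f.eval 0)⟩
  rcases (by simpa [g] using hy : f.eval y = 0 ∨ f.eval (-y) = 0) with h | h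
  exacts [⟨y, h⟩, ⟨-y, h⟩]

open Fin.NatCast in
theorem Fin.exists_sub_add_one_eq_of_sum_eq_zero {M : Type*} [AddCommGroup M] {n : ℕ}
    (c : Fin (n + 1) → M) (hc : ∑ i, c i = 0) :
    ∃ τ : Fin (n + 1) → M, ∀ i, τ i - τ (i + 1) = c i := by
  refine ⟨fun j => -∑ l ∈ range j, c l, fun i => ?_⟩
  simp only [Fin.val_add_one]
  split_ifs with hi
  · subst hi
    rw [Fin.sum_univ_castSucc] at hc
    simp only [Fin.val_last, range_zero, sum_empty, neg_zero, sub_zero,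
      ← Fin.sum_univ_eq_sum_range (fun l => c l), Fin.coe_eq_castSucc]
    exact neg_eq_of_add_eq_zero_right hc
  · rw [sum_range_succ, Fin.cast_val_eq_self]
    abel

lemma Fin.mk_add_one {n k : ℕ} (hk : k + 1 < n + 1) :
    (⟨k, by omega⟩ + 1 : Fin (n + 1)) = ⟨k + 1, hk⟩ :=
  Fin.ext (Fin.val_add_one_of_lt (by simpa [Fin.lt_def] using hk))

theorem Fin.exists_cyclic_solution {K : Type*} [Field K] {n : ℕ} (x r : Fin (n + 1) → K)
    (hx : ∀ i, x i ≠ 0) (h : ∑ i, r i / (x i * x (i + 1)) = 0) :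
    ∃ t : Fin (n + 1) → K, ∀ i, t i * x (i + 1) - t (i + 1) * x i = r i := by
  obtain ⟨τ, hτ⟩ := Fin.exists_sub_add_one_eq_of_sum_eq_zero _ h
  refine ⟨fun i => τ i * x i, fun i => ?_⟩
  have hxi := hx i
  have hxi' := hx (i + 1)
  have hτi := hτ i
  field_simp at hτi ⊢
  linear_combination hτi

namespace Cyclic

variable {R : Type*} [CommRing R] {n : ℕ}

lemma sub_one_ne_add_one (i : Fin (n + 3)) : i - 1 ≠ i + 1 := by
  rw [Ne, sub_eq_iff_eq_add, add_assoc, left_eq_add, Fin.ext_iff]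
  simp [Fin.val_add, Nat.mod_eq_of_lt]

lemma card_compl_pair (i : Fin (n + 3)) : #({i, i + 1}ᶜ : Finset _) = n + 1 := by
  rw [card_compl, card_pair (by simp), Fintype.card_fin]
  rfl

lemma mul_prod_compl_pair_add_one (x : Fin (n + 3) → R) (i : Fin (n + 3)) :
    x (i + 1) * ∏ j ∈ {i, i + 1}ᶜ, x j = ∏ j ∈ {i}ᶜ, x j := by
  rw [← mul_prod_erase {i}ᶜ x (show i + 1 ∈ {i}ᶜ by simp)]
  congr 2; ext; simp [and_comm]

lemma mul_prod_compl_pair_self (x : Fin (n + 3) → R) (i : Fin (n + 3)) :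
    x i * ∏ j ∈ {i, i + 1}ᶜ, x j = ∏ j ∈ {i + 1}ᶜ, x j := by
  rw [← mul_prod_erase {i + 1}ᶜ x (show i ∈ {i + 1}ᶜ by simp)]
  congr 2; ext; simp

lemma mul_mul_prod_compl_pair (x : Fin (n + 3) → R) (i : Fin (n + 3)) :
    x i * x (i + 1) * ∏ j ∈ {i, i + 1}ᶜ, x j = ∏ j, x j := by
  rw [mul_assoc, mul_prod_compl_pair_add_one, ← Fintype.prod_eq_mul_prod_compl]

lemma sum_mul_prod_compl_pair_eq_zero (x y : Fin (n + 3) → R) :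
    ∑ i, (y i * x (i + 1) - y (i + 1) * x i) * ∏ j ∈ {i, i + 1}ᶜ, x j = 0 := by
  simp only [sub_mul, mul_assoc, mul_prod_compl_pair_add_one, mul_prod_compl_pair_self,
    sum_sub_distrib]
  exact sub_eq_zero.mpr (Fintype.sum_equiv (Equiv.addRight 1) _ _ fun _ => rfl).symm

def wedge (x y : Fin (n + 3) → R) (i : Fin (n + 3)) : R := y i * x (i + 1) - y (i + 1) * x i

def diffSum (x y : Fin (n + 3) → R) : R := ∑ i, (y (i + 1) - y i) * ∏ j ∈ {i, i + 1}ᶜ, x j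

/-- The value of `wedgePoly x y N` at any `s` with `N * s + x i = 0`. -/
def rootObstruction (x y : Fin (n + 3) → R) (i : Fin (n + 3)) : R :=
  ∑ l, wedge x y l * ∏ j ∈ {l, l + 1}ᶜ, (x j - x i)

lemma sum_wedge_mul_prod_add (x y : Fin (n + 3) → R) (z : R) :
    ∑ i, wedge x y i * ∏ j ∈ {i, i + 1}ᶜ, (x j + z) = z * diffSum (fun j => x j + z) y := by
  have wedge_eq (i : Fin (n + 3)) : wedge x y i =
      (y i * (x (i + 1) + z) - y (i + 1) * (x i + z)) + z * (y (i + 1) - y i) := by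
    unfold wedge; ring
  simp only [wedge_eq, add_mul, sum_add_distrib, diffSum,
    sum_mul_prod_compl_pair_eq_zero (fun j => x j + z), zero_add, mul_sum, mul_assoc]

noncomputable def wedgePoly (x y : Fin (n + 3) → R) (N : R) : R[X] :=
  ∑ i, C (wedge x y i) * ∏ j ∈ {i, i + 1}ᶜ, (C N * X + C (x j))

noncomputable def diffPoly (x y : Fin (n + 3) → R) (N : R) : R[X] :=
  ∑ i, C (y (i + 1) - y i) * ∏ j ∈ {i, i + 1}ᶜ, (C N * X + C (x j))

lemma eval_wedgePoly (x y : Fin (n + 3) → R) (N s : R) :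
    (wedgePoly x y N).eval s = ∑ i, wedge x y i * ∏ j ∈ {i, i + 1}ᶜ, (N * s + x j) := by
  simp [wedgePoly, eval_finsetSum, eval_prod]

lemma eval_diffPoly (x y : Fin (n + 3) → R) (N s : R) :
    (diffPoly x y N).eval s = diffSum (fun j => N * s + x j) y := by
  simp [diffPoly, diffSum, eval_finsetSum, eval_prod]

lemma wedgePoly_eq (x y : Fin (n + 3) → R) (N : R) :
    wedgePoly x y N = C N * X * diffPoly x y N := by
  have := sum_wedge_mul_prod_add (C ∘ x) (C ∘ y) (C N * X)
  simp only [Function.comp_apply, wedge, diffSum, ← map_mul, ← map_sub,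
    add_comm _ (C N * X)] at this
  simpa only [wedgePoly, diffPoly, wedge, mul_sum, ← mul_assoc] using this

lemma natDegree_wedgePoly_le (x y : Fin (n + 3) → R) (N : R) :
    (wedgePoly x y N).natDegree ≤ n + 1 := by
  refine natDegree_sum_le_of_forall_le _ _ fun i _ => (natDegree_C_mul_le _ _).trans ?_
  refine (natDegree_prod_le _ _).trans
    ((sum_le_card_nsmul _ _ 1 fun _ _ => natDegree_linear_le).trans ?_)
  rw [card_compl_pair, smul_eq_mul, mul_one]

lemma coeff_wedgePoly (x y : Fin (n + 3) → R) (N : R) :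
    (wedgePoly x y N).coeff (n + 1) = (∑ i, wedge x y i) * N ^ (n + 1) := by
  simp only [wedgePoly, finsetSum_coeff, sum_mul]
  refine sum_congr rfl fun i _ => ?_
  have coeff_prod := coeff_prod_of_natDegree_le {i, i + 1}ᶜ (fun j => C N * X + C (x j)) 1
    fun _ _ => natDegree_linear_le
  have coeff_one (j : Fin (n + 3)) : (C N * X + C (x j)).coeff 1 = N := by simp
  rw [card_compl_pair, mul_one] at coeff_prod
  rw [coeff_C_mul, coeff_prod, prod_congr rfl fun j _ => coeff_one j, prod_const, card_compl_pair]

lemma natDegree_diffPoly [IsDomain R] {x y : Fin (n + 3) → R} {N : R} (hN : N ≠ 0)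
    (hwedge : ∑ i, wedge x y i ≠ 0) : (diffPoly x y N).natDegree = n := by
  have hcoeff : (wedgePoly x y N).coeff (n + 1) ≠ 0 := by
    rw [coeff_wedgePoly]
    exact mul_ne_zero hwedge (pow_ne_zero _ hN)
  have hdeg : (wedgePoly x y N).natDegree = n + 1 :=
    (natDegree_wedgePoly_le x y N).antisymm (le_natDegree_of_ne_zero hcoeff)
  have hdiff : diffPoly x y N ≠ 0 := by
    rintro h
    rw [wedgePoly_eq, h, mul_zero, coeff_zero] at hcoeff
    exact hcoeff rfl
  rw [wedgePoly_eq, natDegree_mul (by simpa using hN) hdiff, natDegree_C_mul_X _ hN] at hdeg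
  omega

theorem exists_root_diffPoly {x y : Fin (n + 3) → ℝ} {N : ℝ} (hn : Odd n) (hN : N ≠ 0)
    (hwedge : ∑ i, wedge x y i ≠ 0) (hdiff : diffSum x y ≠ 0)
    (hroot : ∀ i, rootObstruction x y i ≠ 0) :
    ∃ s ≠ 0, (diffPoly x y N).eval s = 0 ∧ ∀ i, N * s + x i ≠ 0 := by
  obtain ⟨s, hs⟩ := Real.exists_isRoot_of_odd_natDegree ((natDegree_diffPoly hN hwedge).symm ▸ hn)
  refine ⟨s, ?_, hs, fun i hi => hroot i ?_⟩
  · rintro rfl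
    exact hdiff (by simpa [IsRoot, eval_diffPoly] using hs)
  · have hwedge_s : (wedgePoly x y N).eval s = 0 := by simp [wedgePoly_eq, hs.eq_zero]
    rw [eval_wedgePoly] at hwedge_s
    simpa [rootObstruction, eq_neg_of_add_eq_zero_left hi, ← sub_eq_neg_add] using hwedge_s

lemma sum_div_mul_add_one {K : Type*} [Field K] (x r : Fin (n + 3) → K) (hx : ∀ i, x i ≠ 0) :
    ∑ i, r i / (x i * x (i + 1)) = (∑ i, r i * ∏ j ∈ {i, i + 1}ᶜ, x j) / ∏ j, x j := by
  rw [sum_div]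
  refine sum_congr rfl fun i _ => ?_
  rw [div_eq_div_iff (mul_ne_zero (hx i) (hx (i + 1))) (prod_ne_zero_iff.mpr fun j _ => hx j),
    ← mul_mul_prod_compl_pair x i]
  ring

theorem exists_shifted_cyclic_solution {x y : Fin (n + 3) → ℝ} {N : ℝ} (hn : Odd n)
    (hN : N ≠ 0) (hwedge : ∑ i, wedge x y i ≠ 0) (hdiff : diffSum x y ≠ 0)
    (hroot : ∀ i, rootObstruction x y i ≠ 0) :
    ∃ s ≠ 0, ∃ t : Fin (n + 3) → ℝ,
      ∀ i, t i * (N * s + x (i + 1)) - t (i + 1) * (N * s + x i) = s * (y (i + 1) - y i) := by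
  obtain ⟨s, hs, hroot_s, hx⟩ := exists_root_diffPoly hn hN hwedge hdiff hroot
  refine ⟨s, hs, Fin.exists_cyclic_solution _ _ hx ?_⟩
  rw [eval_diffPoly, diffSum] at hroot_s
  rw [sum_div_mul_add_one _ _ hx]
  simp only [mul_assoc, ← mul_sum, hroot_s, mul_zero, zero_div]

section Witness

variable (i : Fin (n + 3))

lemma wedge_indicator (l : Fin (n + 3)) :
    wedge (fun j => if j = i ∨ j = i + 1 then (1 : R) else 0) (Pi.single i 1) l =
      if l = i then 1 else 0 := by
  have hprev : i - 1 ≠ i := by simp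
  unfold wedge
  by_cases hl : l = i
  · subst hl; simp
  by_cases hl' : l + 1 = i
  · obtain rfl : l = i - 1 := eq_sub_of_add_eq hl'
    simp [hprev, sub_one_ne_add_one]
  · simp [hl, hl']

lemma sum_wedge_indicator :
    ∑ l, wedge (fun j => if j = i ∨ j = i + 1 then (1 : R) else 0) (Pi.single i 1) l = 1 := by
  simp [wedge_indicator]

lemma rootObstruction_indicator :
    rootObstruction (fun j => if j = i ∨ j = i + 1 then (1 : R) else 0) (Pi.single i 1) i =
      (-1) ^ (n + 1) := by
  rw [rootObstruction, sum_eq_single i (fun l _ hl => by simp [wedge_indicator, hl]) (by simp),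
    wedge_indicator, if_pos rfl, one_mul, ← card_compl_pair i, ← prod_const]
  refine prod_congr rfl fun j hj => ?_
  simp_all

lemma diffSum_indicator :
    diffSum (fun j => if j = i + 1 then (0 : R) else 1) (Pi.single i 1) = -1 := by
  have hprev : i - 1 ≠ i := by simp
  rw [diffSum, Fintype.sum_eq_add (i - 1) i hprev]
  · have hnext : i + 1 ∈ ({i - 1, i}ᶜ : Finset _) := by simp [(sub_one_ne_add_one i).symm]
    rw [sub_add_cancel, prod_eq_zero hnext (by simp), prod_eq_one fun j hj => by simp_all]
    simp
  · rintro l ⟨hl, hl'⟩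
    simp [hl', mt eq_sub_of_add_eq hl]

end Witness

end Cyclic

theorem Generic.apply_ne_zero {n : ℕ} {p : Fin n → Fin 2 → ℝ} (hp : Generic n p)
    (I : ∀ (R : Type) [CommRing R], (Fin n → Fin 2 → R) → R)
    (hI : ∀ (R S : Type) [CommRing R] [CommRing S] (f : R →+* S) (π : Fin n → Fin 2 → R),
      f (I R π) = I S fun v k => f (π v k))
    {w : Fin n → Fin 2 → ℝ} (hw : I ℝ w ≠ 0) : I ℝ p ≠ 0 := by
  -- `I` at the formal coordinates is a rational polynomial, nonzero since it does not vanish at `w`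
  set F := I _ fun v k => (MvPolynomial.X (v, k) : MvPolynomial (Fin n × Fin 2) ℚ)
  have aeval_F (y : Fin n → Fin 2 → ℝ) : MvPolynomial.aeval (fun v => y v.1 v.2) F = I ℝ y := by
    simpa using hI _ _ (MvPolynomial.aeval (R := ℚ) fun v : Fin n × Fin 2 => y v.1 v.2).toRingHom
      fun v k => MvPolynomial.X (v, k)
  rw [← aeval_F] at hw ⊢
  exact hp F fun hF => hw (by rw [hF, map_zero])

namespace Bipyramid

open Cyclic

variable {R : Type*} [CommRing R] {m : ℕ}

def cross (u w : Fin 2 → R) : R := u 0 * w 1 - u 1 * w 0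

def rot (v : Fin 2 → R) : Fin 2 → R := ![-v 1, v 0]

lemma vol_two (x : Fin 3 → Fin 2 → ℝ) : vol 2 x = cross (x 1 - x 0) (x 2 - x 0) := by
  rw [vol, Matrix.det_fin_three]
  have cases_one (y : Fin 2 → ℝ) : (Fin.cases 1 y (1 : Fin 3) : ℝ) = y 0 := rfl
  have cases_two (y : Fin 2 → ℝ) : (Fin.cases 1 y (2 : Fin 3) : ℝ) = y 1 := rfl
  simp only [Matrix.of_apply, Fin.cases_zero, cases_one, cases_two, cross, Pi.sub_apply]
  ring

section Shift

variable (a v u w : Fin 2 → R) (s t t' : R)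

lemma cross_add_shift_sub_sub :
    cross (u + s • rot v + t • v - a) (w + s • rot v + t' • v - a) - cross (u - a) (w - a) =
      t * (v ⬝ᵥ v * s + cross v (w - a)) - t' * (v ⬝ᵥ v * s + cross v (u - a)) -
        s * (v ⬝ᵥ (w - a) - v ⬝ᵥ (u - a)) := by
  simp only [cross, rot, dotProduct, Fin.sum_univ_two, Pi.add_apply, Pi.sub_apply, Pi.smul_apply,
    smul_eq_mul, Matrix.cons_val_zero, Matrix.cons_val_one]
  ring

lemma cross_sub_add_shift_sub :
    cross (w + s • rot v + t' • v - (u + s • rot v + t • v)) (a + v - (u + s • rot v + t • v)) -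
        cross (w - u) (a + v - u) =
      t * (v ⬝ᵥ v * s + cross v (w - a)) - t' * (v ⬝ᵥ v * s + cross v (u - a)) -
        s * (v ⬝ᵥ (w - a) - v ⬝ᵥ (u - a)) := by
  simp only [cross, rot, dotProduct, Fin.sum_univ_two, Pi.add_apply, Pi.sub_apply, Pi.smul_apply,
    smul_eq_mul, Matrix.cons_val_zero, Matrix.cons_val_one]
  ring

lemma cross_add_shift :
    cross v (u + s • rot v + t • v - a) = cross v (u - a) + s * v ⬝ᵥ v := by
  simp only [cross, rot, dotProduct, Fin.sum_univ_two, Pi.add_apply, Pi.sub_apply, Pi.smul_apply,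
    smul_eq_mul, Matrix.cons_val_zero, Matrix.cons_val_one]
  ring

end Shift

def equator (j : Fin (m + 3)) : Fin (m + 5) := j.castSucc.succ

def axis (π : Fin (m + 5) → Fin 2 → R) : Fin 2 → R := π (Fin.last _) - π 0

def axisNormSq (π : Fin (m + 5) → Fin 2 → R) : R := axis π ⬝ᵥ axis π

def perpCoord (π : Fin (m + 5) → Fin 2 → R) (j : Fin (m + 3)) : R :=
  cross (axis π) (π (equator j) - π 0)

def axialCoord (π : Fin (m + 5) → Fin 2 → R) (j : Fin (m + 3)) : R :=
  axis π ⬝ᵥ (π (equator j) - π 0)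

section Flex

variable (p : Fin (m + 5) → Fin 2 → ℝ) (s : ℝ) (t : Fin (m + 3) → ℝ)

def flex : Fin (m + 5) → Fin 2 → ℝ :=
  Fin.cons (p 0) (Fin.snoc (fun j => p (equator j) + s • rot (axis p) + t j • axis p)
    (p (Fin.last _)))

def flexDefect (j : Fin (m + 3)) : ℝ :=
  t j * (axisNormSq p * s + perpCoord p (j + 1)) - t (j + 1) * (axisNormSq p * s + perpCoord p j) -
    s * (axialCoord p (j + 1) - axialCoord p j)

@[simp] lemma flex_zero : flex p s t 0 = p 0 := rfl

@[simp] lemma flex_last : flex p s t (Fin.last _) = p (Fin.last _) := by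
  rw [← Fin.succ_last, flex, Fin.cons_succ, Fin.snoc_last, Fin.succ_last]

@[simp] lemma flex_equator (j : Fin (m + 3)) :
    flex p s t (equator j) = p (equator j) + s • rot (axis p) + t j • axis p := by
  simp [flex, equator]

lemma vol_flex_lower_sub (j : Fin (m + 3)) :
    vol 2 (flex p s t ∘ ![0, equator j, equator (j + 1)]) -
      vol 2 (p ∘ ![0, equator j, equator (j + 1)]) = flexDefect p s t j := by
  simp only [vol_two, Function.comp_apply, Matrix.cons_val_zero, Matrix.cons_val_one,
    Matrix.cons_val_two, Matrix.head_cons, Matrix.tail_cons, flex_zero, flex_equator]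
  exact cross_add_shift_sub_sub _ _ _ _ _ _ _

lemma vol_flex_upper_sub (j : Fin (m + 3)) :
    vol 2 (flex p s t ∘ ![equator j, equator (j + 1), Fin.last _]) -
      vol 2 (p ∘ ![equator j, equator (j + 1), Fin.last _]) = flexDefect p s t j := by
  simp only [vol_two, Function.comp_apply, Matrix.cons_val_zero, Matrix.cons_val_one,
    Matrix.cons_val_two, Matrix.head_cons, Matrix.tail_cons, flex_last, flex_equator]
  rw [← add_sub_cancel (p 0) (p (Fin.last _))]
  exact cross_sub_add_shift_sub _ _ _ _ _ _ _

lemma vol_flex_apex_sub :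
    vol 2 (flex p s t ∘ ![0, Fin.last _, equator 0]) - vol 2 (p ∘ ![0, Fin.last _, equator 0]) =
      s * axisNormSq p := by
  simp only [vol_two, Function.comp_apply, Matrix.cons_val_zero, Matrix.cons_val_one,
    Matrix.cons_val_two, Matrix.head_cons, Matrix.tail_cons, flex_zero, flex_last, flex_equator]
  rw [show p (Fin.last _) - p 0 = axis p from rfl, cross_add_shift, axisNormSq]
  ring

end Flex

def witness (x y : Fin (m + 3) → ℝ) : Fin (m + 5) → Fin 2 → ℝ :=
  Fin.cons 0 (Fin.snoc (fun j => ![-x j, y j]) ![0, 1])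

section Witness

variable (x y : Fin (m + 3) → ℝ)

lemma axis_witness : axis (witness x y) = ![0, 1] := by
  rw [axis, ← Fin.succ_last, witness, Fin.cons_succ, Fin.snoc_last, Fin.cons_zero, sub_zero]

@[simp] lemma axisNormSq_witness : axisNormSq (witness x y) = 1 := by
  simp [axisNormSq, axis_witness]

@[simp] lemma perpCoord_witness : perpCoord (witness x y) = x := by
  ext j
  simp [perpCoord, axis_witness, cross]
  simp [equator, witness]

@[simp] lemma axialCoord_witness : axialCoord (witness x y) = y := by
  ext j
  simp [axialCoord, axis_witness, dotProduct]
  simp [equator, witness]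

end Witness

variable {p : Fin (m + 5) → Fin 2 → ℝ}

lemma _root_.Generic.axisNormSq_ne_zero (hp : Generic (m + 5) p) : axisNormSq p ≠ 0 :=
  hp.apply_ne_zero (fun _ _ π => axisNormSq π)
    (fun _ _ _ _ f π => by simp [axisNormSq, axis, dotProduct])
    (w := witness 0 0) (by simp)

lemma _root_.Generic.sum_wedge_ne_zero (hp : Generic (m + 5) p) :
    ∑ i, wedge (perpCoord p) (axialCoord p) i ≠ 0 :=
  hp.apply_ne_zero (fun _ _ π => ∑ i, wedge (perpCoord π) (axialCoord π) i)
    (fun _ _ _ _ f π => by simp [wedge, perpCoord, axialCoord, cross, axis, dotProduct])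
    (w := witness (fun j => if j = 0 ∨ j = 0 + 1 then 1 else 0) (Pi.single 0 1))
    (by rw [perpCoord_witness, axialCoord_witness, sum_wedge_indicator]; exact one_ne_zero)

lemma _root_.Generic.diffSum_ne_zero (hp : Generic (m + 5) p) :
    diffSum (perpCoord p) (axialCoord p) ≠ 0 :=
  hp.apply_ne_zero (fun _ _ π => diffSum (perpCoord π) (axialCoord π))
    (fun _ _ _ _ f π => by simp [diffSum, perpCoord, axialCoord, cross, axis, dotProduct])
    (w := witness (fun j => if j = 0 + 1 then 0 else 1) (Pi.single 0 1))
    (by rw [perpCoord_witness, axialCoord_witness, diffSum_indicator]; simp)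

lemma _root_.Generic.rootObstruction_ne_zero (hp : Generic (m + 5) p) (i : Fin (m + 3)) :
    rootObstruction (perpCoord p) (axialCoord p) i ≠ 0 :=
  hp.apply_ne_zero (fun _ _ π => rootObstruction (perpCoord π) (axialCoord π) i)
    (fun _ _ _ _ f π => by
      simp [rootObstruction, wedge, perpCoord, axialCoord, cross, axis, dotProduct])
    (w := witness (fun j => if j = i ∨ j = i + 1 then 1 else 0) (Pi.single i 1))
    (by rw [perpCoord_witness, axialCoord_witness, rootObstruction_indicator]; simp)

theorem _root_.Generic.exists_flexDefect_eq_zero (hp : Generic (m + 5) p) (hm : Odd m) :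
    ∃ s ≠ 0, ∃ t : Fin (m + 3) → ℝ, ∀ j, flexDefect p s t j = 0 := by
  obtain ⟨s, hs, t, ht⟩ := exists_shifted_cyclic_solution hm hp.axisNormSq_ne_zero
    hp.sum_wedge_ne_zero hp.diffSum_ne_zero hp.rootObstruction_ne_zero
  exact ⟨s, hs, t, fun j => sub_eq_zero.mpr (ht j)⟩

open Fin.NatCast in
lemma natCast_add_one_eq_equator {k : ℕ} (hk : k < m + 3) :
    ((k + 1 : ℕ) : Fin (m + 5)) = equator ⟨k, hk⟩ :=
  Fin.ext (Fin.val_cast_of_lt (by omega))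

open Fin.NatCast in
lemma exists_of_mem_bipyramidEdges {h : Fin 3 → Fin (m + 5)} (hh : h ∈ bipyramidEdges m) :
    ∃ j : Fin (m + 3), h = ![0, equator j, equator (j + 1)] ∨
      h = ![equator j, equator (j + 1), Fin.last _] := by
  have last_eq : ((m + 4 : ℕ) : Fin (m + 5)) = Fin.last _ :=
    Fin.ext (Fin.val_cast_of_lt (by omega))
  have one_eq : (1 : Fin (m + 5)) = equator (Fin.last _ + 1) := by
    rw [Fin.last_add_one]; rfl
  rcases hh with ⟨i, hi1, hi2, hlower | hupper⟩ | (rfl | rfl)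
  · obtain ⟨k, rfl⟩ := Nat.exists_eq_add_of_le' hi1
    refine ⟨⟨k, by omega⟩, Or.inl ?_⟩
    rw [hlower, natCast_add_one_eq_equator, natCast_add_one_eq_equator, Fin.mk_add_one (by omega)]
  · obtain ⟨k, rfl⟩ := Nat.exists_eq_add_of_le' hi1
    refine ⟨⟨k, by omega⟩, Or.inr ?_⟩
    rw [hupper, natCast_add_one_eq_equator, natCast_add_one_eq_equator, Fin.mk_add_one (by omega),
      last_eq]
  · exact ⟨Fin.last _, Or.inl (by rw [natCast_add_one_eq_equator, one_eq]; rfl)⟩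
  · exact ⟨Fin.last _, Or.inr (by rw [natCast_add_one_eq_equator, one_eq, last_eq]; rfl)⟩

end Bipyramid

/-- For an even number of vertices `n = m + 5 ≥ 5`, every generic framework of
the `(n−2)`-gonal bipyramid in `ℝ²` has at least two congruence classes:
there is a framework equivalent to it (equal signed areas on all hyperedges)
but not congruent to it (the signed areas of some triple of vertices differ). -/
theorem bipyramid_two_congruence_classes (m : ℕ) (hEven : Even (m + 5))
    (p : Fin (m + 5) → Fin 2 → ℝ) (hp : Generic (m + 5) p) :
    ∃ q : Fin (m + 5) → Fin 2 → ℝ,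
      (∀ h ∈ bipyramidEdges m, vol 2 (q ∘ h) = vol 2 (p ∘ h)) ∧
      ¬ ∀ t : Fin 3 → Fin (m + 5), vol 2 (q ∘ t) = vol 2 (p ∘ t) := by
  obtain ⟨s, hs, t, ht⟩ :=
    hp.exists_flexDefect_eq_zero (by obtain ⟨r, hr⟩ := hEven; exact ⟨r - 3, by omega⟩)
  refine ⟨Bipyramid.flex p s t, fun h hh => ?_, fun hcongr => ?_⟩
  · obtain ⟨j, rfl | rfl⟩ := Bipyramid.exists_of_mem_bipyramidEdges hh
    · rw [← sub_eq_zero, Bipyramid.vol_flex_lower_sub, ht]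
    · rw [← sub_eq_zero, Bipyramid.vol_flex_upper_sub, ht]
  · have h_apex := Bipyramid.vol_flex_apex_sub p s t
    rw [hcongr, sub_self] at h_apex
    exact mul_ne_zero hs hp.axisNormSq_ne_zero h_apex.symm
end

section
/- Let Θ₁ = (V₁,H₁) and Θ₂ = (V₂,H₂) be 3-uniform hypergraphs glued along a common hyperedge ijk (identifying i₁∼i₂, j₁∼j₂, k₁∼k₂), and let Θ′ = (V, H₁ ∪ H₂ \ {ijk}). Assume ijk is generically globally linked in both Θ₁ and Θ₂ (its signed area is determined by the other hyperedges). Then two generic frameworks (Θ′,p) and (Θ′,q) with p(i),p(j),p(k) affinely independent are congruent if and only if the restrictions (Θ₁, p|V₁), (Θ₂, p|V₂) are congruent to (Θ₁, q|V₁), (Θ₂, q|V₂) respectively. -/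
private def d2 (a b c : Fin 2 → ℝ) : ℝ :=
  b 0 * c 1 - b 1 * c 0 - a 0 * c 1 + a 1 * c 0 + a 0 * b 1 - a 1 * b 0

private lemma vol_eq_d2 (x : Fin 3 → Fin 2 → ℝ) : vol 2 x = d2 (x 0) (x 1) (x 2) := by
  show Matrix.det _ = _
  rw [Matrix.det_fin_three]
  simp only [Matrix.of_apply, show (1 : Fin 3) = Fin.succ 0 from rfl,
    show (2 : Fin 3) = Fin.succ 1 from rfl, Fin.cases_zero, Fin.cases_succ, d2]
  ring

set_option maxHeartbeats 1000000 in
private lemma key2 (a b c i j k : Fin 2 → ℝ) :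
    d2 a b c * d2 i j k ^ 2 =
        d2 a j k * (d2 i b k * d2 i j c - d2 i c k * d2 i j b)
      - d2 b j k * (d2 i a k * d2 i j c - d2 i c k * d2 i j a)
      + d2 c j k * (d2 i a k * d2 i j b - d2 i b k * d2 i j a) := by
  unfold d2
  ring

/-- Let `Θ₁ = (V₁,H₁)` and `Θ₂ = (V₂,H₂)` be 3-uniform hypergraphs glued along
the common hyperedge `ijk` (`V₁ ∩ V₂ = {i,j,k}`), and let
`Θ′ = (V₁ ∪ V₂, H₁ ∪ H₂ \ {ijk})`.  Assume `ijk` is generically globally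
linked in both pieces (its signed area is determined by the other hyperedges).
Then two generic frameworks `(Θ′,p)`, `(Θ′,q)` with `p i, p j, p k` affinely
independent are congruent if and only if the restrictions to `V₁` and to `V₂`
are respectively congruent. -/
theorem gluing_congruence (n : ℕ) (V₁ V₂ : Set (Fin n))
    (H₁ H₂ : Set (Fin 3 → Fin n)) (i j k : Fin n)
    (hVu : V₁ ∪ V₂ = Set.univ) (hV : V₁ ∩ V₂ = {i, j, k})
    (hH₁ : ∀ h ∈ H₁, ∀ a, h a ∈ V₁) (hH₂ : ∀ h ∈ H₂, ∀ a, h a ∈ V₂)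
    (ht₁ : ![i, j, k] ∈ H₁) (ht₂ : ![i, j, k] ∈ H₂)
    (hlink₁ : ∀ p q : Fin n → Fin 2 → ℝ, Generic n p → Generic n q →
      (∀ h ∈ H₁ \ {![i, j, k]}, vol 2 (p ∘ h) = vol 2 (q ∘ h)) →
      vol 2 (p ∘ ![i, j, k]) = vol 2 (q ∘ ![i, j, k]))
    (hlink₂ : ∀ p q : Fin n → Fin 2 → ℝ, Generic n p → Generic n q →
      (∀ h ∈ H₂ \ {![i, j, k]}, vol 2 (p ∘ h) = vol 2 (q ∘ h)) →
      vol 2 (p ∘ ![i, j, k]) = vol 2 (q ∘ ![i, j, k]))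
    (p q : Fin n → Fin 2 → ℝ) (hp : Generic n p) (hq : Generic n q)
    (hind : vol 2 (p ∘ ![i, j, k]) ≠ 0) :
    (∀ t : Fin 3 → Fin n, vol 2 (p ∘ t) = vol 2 (q ∘ t)) ↔
      ((∀ t : Fin 3 → Fin n, (∀ a, t a ∈ V₁) →
          vol 2 (p ∘ t) = vol 2 (q ∘ t)) ∧
       (∀ t : Fin 3 → Fin n, (∀ a, t a ∈ V₂) →
          vol 2 (p ∘ t) = vol 2 (q ∘ t))) := by
  have hvc : ∀ (r : Fin n → Fin 2 → ℝ) (t : Fin 3 → Fin n),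
      vol 2 (r ∘ t) = d2 (r (t 0)) (r (t 1)) (r (t 2)) := by
    intro r t; rw [vol_eq_d2]; rfl
  have hvc' : ∀ (r : Fin n → Fin 2 → ℝ) (x y z : Fin n),
      vol 2 (r ∘ ![x, y, z]) = d2 (r x) (r y) (r z) := by
    intro r x y z; rw [hvc]; simp
  constructor
  · intro h; exact ⟨fun t _ => h t, fun t _ => h t⟩
  · rintro ⟨h1, h2⟩ t
    have hi : i ∈ V₁ ∩ V₂ := hV ▸ (by simp)
    have hj : j ∈ V₁ ∩ V₂ := hV ▸ (by simp)
    have hk : k ∈ V₁ ∩ V₂ := hV ▸ (by simp)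
    have hmem : ∀ x : Fin n, x ∈ V₁ ∨ x ∈ V₂ := fun x => by
      have hx : x ∈ V₁ ∪ V₂ := by rw [hVu]; trivial
      exact hx
    have main : ∀ x : Fin n,
        d2 (p x) (p j) (p k) = d2 (q x) (q j) (q k) ∧
        d2 (p i) (p x) (p k) = d2 (q i) (q x) (q k) ∧
        d2 (p i) (p j) (p x) = d2 (q i) (q j) (q x) := by
      intro x
      rcases hmem x with hx | hx
      · refine ⟨?_, ?_, ?_⟩
        · have := h1 ![x, j, k] (fun a => by
            fin_cases a <;> simp [hx, hi.1, hj.1, hk.1])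
          simpa [hvc'] using this
        · have := h1 ![i, x, k] (fun a => by
            fin_cases a <;> simp [hx, hi.1, hj.1, hk.1])
          simpa [hvc'] using this
        · have := h1 ![i, j, x] (fun a => by
            fin_cases a <;> simp [hx, hi.1, hj.1, hk.1])
          simpa [hvc'] using this
      · refine ⟨?_, ?_, ?_⟩
        · have := h2 ![x, j, k] (fun a => by
            fin_cases a <;> simp [hx, hi.2, hj.2, hk.2])
          simpa [hvc'] using this
        · have := h2 ![i, x, k] (fun a => by
            fin_cases a <;> simp [hx, hi.2, hj.2, hk.2])
          simpa [hvc'] using this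
        · have := h2 ![i, j, x] (fun a => by
            fin_cases a <;> simp [hx, hi.2, hj.2, hk.2])
          simpa [hvc'] using this
    have hDq : d2 (p i) (p j) (p k) = d2 (q i) (q j) (q k) := (main i).1
    have hD : d2 (p i) (p j) (p k) ≠ 0 := by
      rw [← hvc']; exact hind
    have hDq0 : d2 (q i) (q j) (q k) ≠ 0 := hDq ▸ hD
    obtain ⟨A0, B0, C0⟩ := main (t 0)
    obtain ⟨A1, B1, C1⟩ := main (t 1)
    obtain ⟨A2, B2, C2⟩ := main (t 2)
    have e1 := key2 (p (t 0)) (p (t 1)) (p (t 2)) (p i) (p j) (p k)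
    rw [hDq, A0, A1, A2, B0, B1, B2, C0, C1, C2] at e1
    have e2 := key2 (q (t 0)) (q (t 1)) (q (t 2)) (q i) (q j) (q k)
    have := e1.trans e2.symm
    have hfin : d2 (p (t 0)) (p (t 1)) (p (t 2)) = d2 (q (t 0)) (q (t 1)) (q (t 2)) :=
      mul_right_cancel₀ (pow_ne_zero 2 hDq0) this
    rw [hvc p t, hvc q t, hfin]
end

section
/- Pinning bijection: let (Θ,p) be a non-flat framework in ℝ^d with a distinguished hyperedge of nonzero volume. Every framework (Θ,q) congruent to (Θ,p) has the same standard pinning (Θ, q̄) = (Θ, p̄), and the map [q] ↦ q̄ is a bijection between congruence classes of configurations equivalent to (Θ,p) and standard-pinned configurations equivalent to (Θ, p̄). -/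
/-- A configuration is standard pinned if its first `d+1` vertices form the
standard simplex: vertex `0` at the origin and vertex `i+1` at the standard
basis vector `eᵢ` for `0 ≤ i < d`. -/
def Pinned (d n : ℕ) (hn : d + 1 ≤ n) (q : Fin n → Fin d → ℝ) : Prop :=
  ∀ i : Fin (d + 1), ∀ j : Fin d,
    q (Fin.castLE hn i) j = if (i : ℕ) = (j : ℕ) + 1 then 1 else 0

/-- `q'` is an affine image of `q`: `q' i = A (q i) + b` for all vertices. -/
def AffImage (d n : ℕ) (q q' : Fin n → Fin d → ℝ) : Prop :=
  ∃ (A : Matrix (Fin d) (Fin d) ℝ) (b : Fin d → ℝ),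
    ∀ i : Fin n, A.mulVec (q i) + b = q' i

namespace PinAux

/-- the augmented matrix `[[1,0],[b,A]]`. -/
def aug {d : ℕ} (A : Matrix (Fin d) (Fin d) ℝ) (b : Fin d → ℝ) :
    Matrix (Fin (d + 1)) (Fin (d + 1)) ℝ :=
  Matrix.of fun i j =>
    Fin.cases (Fin.cases 1 (fun _ => (0 : ℝ)) j)
      (fun k => Fin.cases (b k) (fun l => A k l) j) i

lemma det_aug {d : ℕ} (A : Matrix (Fin d) (Fin d) ℝ) (b : Fin d → ℝ) :
    (aug A b).det = A.det := by
  rw [Matrix.det_succ_row_zero]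
  rw [Fintype.sum_eq_single (0 : Fin (d + 1))]
  · have h1 : (aug A b).submatrix Fin.succ Fin.succ = A := by
      ext k l
      simp [aug]
    rw [Fin.succAbove_zero, h1]
    simp [aug]
  · intro j hj
    obtain ⟨m, rfl⟩ := Fin.eq_succ_of_ne_zero hj
    simp [aug]

lemma vol_affine {d : ℕ} {A : Matrix (Fin d) (Fin d) ℝ} {b : Fin d → ℝ}
    {x y : Fin (d + 1) → Fin d → ℝ} (h : ∀ i, A.mulVec (x i) + b = y i) :
    vol d y = A.det * vol d x := by
  have hm : (Matrix.of fun i j => (Fin.cases 1 (fun k => y j k) i : ℝ) :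
      Matrix (Fin (d + 1)) (Fin (d + 1)) ℝ) =
      aug A b * (Matrix.of fun i j => (Fin.cases 1 (fun k => x j k) i : ℝ)) := by
    ext i j
    induction i using Fin.cases with
    | zero => simp [aug, Matrix.mul_apply, Fin.sum_univ_succ]
    | succ m =>
      have := congrFun (h j) m
      simp only [Pi.add_apply, Matrix.mulVec, dotProduct] at this
      simp [aug, Matrix.mul_apply, Fin.sum_univ_succ, ← this, add_comm]
  unfold vol
  rw [hm, Matrix.det_mul, det_aug]

lemma pinned_base_vol {d n : ℕ} (hn : d + 1 ≤ n) {q : Fin n → Fin d → ℝ}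
    (hp : Pinned d n hn q) :
    vol d (q ∘ fun i => Fin.castLE hn i) = 1 := by
  unfold vol
  rw [Matrix.det_succ_column_zero]
  rw [Fintype.sum_eq_single (0 : Fin (d + 1))]
  · have h1 : ((Matrix.of fun i j => (Fin.cases 1
        (fun k => (q ∘ fun i => Fin.castLE hn i) j k) i : ℝ) :
        Matrix (Fin (d + 1)) (Fin (d + 1)) ℝ).submatrix Fin.succ Fin.succ)
        = (1 : Matrix (Fin d) (Fin d) ℝ) := by
      ext k l
      simp [hp l.succ k, Matrix.one_apply, Fin.val_inj, eq_comm]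
    rw [Fin.succAbove_zero, h1, Matrix.det_one]
    simp
  · intro i hi
    obtain ⟨m, rfl⟩ := Fin.eq_succ_of_ne_zero hi
    simp [hp 0 m]

/-- the base hyperedge with vertex `j+1` replaced by `v`. -/
def tv {d n : ℕ} (hn : d + 1 ≤ n) (v : Fin n) (j : Fin d) : Fin (d + 1) → Fin n :=
  fun i => if i = j.succ then v else Fin.castLE hn i

lemma pinned_coord {d n : ℕ} (hn : d + 1 ≤ n) {q : Fin n → Fin d → ℝ}
    (hp : Pinned d n hn q) (v : Fin n) (j : Fin d) :
    vol d (q ∘ tv hn v j) = q v j := by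
  unfold vol
  rw [Matrix.det_succ_column_zero]
  rw [Fintype.sum_eq_single (0 : Fin (d + 1))]
  · have h1 : ((Matrix.of fun i j' => (Fin.cases 1
        (fun k => (q ∘ tv hn v j) j' k) i : ℝ) :
        Matrix (Fin (d + 1)) (Fin (d + 1)) ℝ).submatrix Fin.succ Fin.succ)
        = (1 : Matrix (Fin d) (Fin d) ℝ).updateCol j (q v) := by
      ext k l
      by_cases hl : l = j
      · subst hl
        simp [tv, Matrix.updateCol_self]
      · have hls : l.succ ≠ j.succ := fun h => hl (Fin.succ_injective _ h)
        simp [tv, hls, Matrix.updateCol_ne hl,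
          hp l.succ k, Matrix.one_apply, Fin.val_inj, eq_comm]
    have h2 : ((1 : Matrix (Fin d) (Fin d) ℝ).updateCol j (q v)).det = q v j := by
      have := congrFun (congrFun (congrArg DFunLike.coe
        (Matrix.cramer_one (n := Fin d) (α := ℝ))) (q v)) j
      rwa [Matrix.cramer_apply] at this
    rw [Fin.succAbove_zero, h1, h2]
    have h3 : (0 : Fin (d + 1)) ≠ j.succ := (Fin.succ_ne_zero j).symm
    simp [tv, h3]
  · intro i hi
    obtain ⟨m, rfl⟩ := Fin.eq_succ_of_ne_zero hi
    have h3 : (0 : Fin (d + 1)) ≠ j.succ := (Fin.succ_ne_zero j).symm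
    simp [tv, h3, hp 0 m]

lemma vols_of_pinned {d n : ℕ} (hn : d + 1 ≤ n) {q qbar : Fin n → Fin d → ℝ}
    (hp : Pinned d n hn qbar) (haff : AffImage d n q qbar)
    (t : Fin (d + 1) → Fin n) :
    vol d (qbar ∘ t) = (vol d (q ∘ fun i => Fin.castLE hn i))⁻¹ * vol d (q ∘ t) := by
  obtain ⟨A, b, hab⟩ := haff
  have h1 : ∀ s : Fin (d + 1) → Fin n, vol d (qbar ∘ s) = A.det * vol d (q ∘ s) :=
    fun s => vol_affine (fun i => hab (s i))
  have h2 : A.det * vol d (q ∘ fun i => Fin.castLE hn i) = 1 := by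
    rw [← h1 (fun i => Fin.castLE hn i)]; exact pinned_base_vol hn hp
  have hb : vol d (q ∘ fun i => Fin.castLE hn i) ≠ 0 := by
    intro h; rw [h, mul_zero] at h2; exact one_ne_zero h2.symm
  have hA : A.det = (vol d (q ∘ fun i => Fin.castLE hn i))⁻¹ := by
    field_simp
    linarith [h2]
  rw [h1 t, hA]

lemma pinned_unique {d n : ℕ} (hn : d + 1 ≤ n) {q qb1 qb2 : Fin n → Fin d → ℝ}
    (h1 : Pinned d n hn qb1) (a1 : AffImage d n q qb1)
    (h2 : Pinned d n hn qb2) (a2 : AffImage d n q qb2) : qb1 = qb2 := by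
  funext v j
  rw [← pinned_coord hn h1 v j, ← pinned_coord hn h2 v j,
    vols_of_pinned hn h1 a1, vols_of_pinned hn h2 a2]

lemma exists_pinned {d n : ℕ} (hn : d + 1 ≤ n) {q : Fin n → Fin d → ℝ}
    (hq : vol d (q ∘ fun i => Fin.castLE hn i) ≠ 0) :
    ∃ qbar, Pinned d n hn qbar ∧ AffImage d n q qbar := by
  set M : Matrix (Fin (d + 1)) (Fin (d + 1)) ℝ :=
    Matrix.of fun i j => Fin.cases 1 (fun k => q (Fin.castLE hn j) k) i with hM
  set N : Matrix (Fin (d + 1)) (Fin (d + 1)) ℝ :=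
    Matrix.of fun i j =>
      Fin.cases 1 (fun k => if (j : ℕ) = (k : ℕ) + 1 then (1 : ℝ) else 0) i with hN
  have hMdet : IsUnit M.det := by
    refine isUnit_iff_ne_zero.mpr ?_
    exact hq
  set B := N * M⁻¹ with hB
  have hBM : B * M = N := by
    rw [hB, Matrix.mul_assoc, Matrix.nonsing_inv_mul M hMdet, Matrix.mul_one]
  refine ⟨fun v k => B k.succ 0 + ∑ l, B k.succ l.succ * q v l, ?_, ?_⟩
  · intro i k
    have := congrFun (congrFun hBM k.succ) i
    rw [Matrix.mul_apply, Fin.sum_univ_succ] at this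
    simpa [hM, hN] using this
  · refine ⟨Matrix.of fun k l => B k.succ l.succ, fun k => B k.succ 0, fun v => ?_⟩
    funext k
    simp [Matrix.mulVec, dotProduct, add_comm]

lemma vol_d_zero (x : Fin 1 → Fin 0 → ℝ) : vol 0 x = 1 := by
  unfold vol
  rw [Matrix.det_fin_one]
  simp

end PinAux



open PinAux

/-- Pinning bijection: let `(Θ,p)` be a non-flat framework in `ℝ^d` whose
distinguished hyperedge (on the first `d+1` vertices) has nonzero volume, and
let `p̄` be its standard pinning (the pinned affine image of `p`).  Then every
framework congruent to `(Θ,p)` has the same standard pinning `p̄`, and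
`[q] ↦ q̄` is a bijection between congruence classes of configurations
equivalent to `(Θ,p)` and standard-pinned configurations equivalent to
`(Θ,p̄)`. -/
theorem pinning_bijection (d n : ℕ) (hn : d + 1 ≤ n)
    (H : Set (Fin (d + 1) → Fin n))
    (hbase : (fun i => Fin.castLE hn i) ∈ H)
    (p : Fin n → Fin d → ℝ)
    (hvol : vol d (p ∘ fun i => Fin.castLE hn i) ≠ 0)
    (pbar : Fin n → Fin d → ℝ)
    (hpin : Pinned d n hn pbar) (hrel : AffImage d n p pbar) :
    (∀ q : Fin n → Fin d → ℝ,
      (∀ t : Fin (d + 1) → Fin n, vol d (q ∘ t) = vol d (p ∘ t)) →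
      ∀ qbar, Pinned d n hn qbar → AffImage d n q qbar → qbar = pbar) ∧
    ∃ F : {q : Fin n → Fin d → ℝ // ∀ h ∈ H, vol d (q ∘ h) = vol d (p ∘ h)} →
        {qbar : Fin n → Fin d → ℝ // Pinned d n hn qbar ∧
          ∀ h ∈ H, vol d (qbar ∘ h) = vol d (pbar ∘ h)},
      (∀ q, AffImage d n q.1 (F q).1) ∧ Function.Surjective F ∧
      ∀ q q', F q = F q' ↔
        ∀ t : Fin (d + 1) → Fin n, vol d (q.1 ∘ t) = vol d (q'.1 ∘ t) := by
  constructor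
  · -- part 1
    intro q hq qbar hqpin hqaff
    funext v j
    rw [← pinned_coord hn hqpin v j, ← pinned_coord hn hpin v j,
      vols_of_pinned hn hqpin hqaff, vols_of_pinned hn hpin hrel,
      hq (fun i => Fin.castLE hn i), hq (tv hn v j)]
  · -- part 2
    have key : ∀ q : {q : Fin n → Fin d → ℝ // ∀ h ∈ H, vol d (q ∘ h) = vol d (p ∘ h)},
        vol d (q.1 ∘ fun i => Fin.castLE hn i) ≠ 0 := by
      intro q
      rw [q.2 _ hbase]
      exact hvol
    have hex : ∀ q : {q : Fin n → Fin d → ℝ // ∀ h ∈ H, vol d (q ∘ h) = vol d (p ∘ h)},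
        ∃ qbar, Pinned d n hn qbar ∧ AffImage d n q.1 qbar :=
      fun q => exists_pinned hn (key q)
    have hFv : ∀ q, Pinned d n hn (Classical.choose (hex q)) ∧
        AffImage d n q.1 (Classical.choose (hex q)) := fun q => Classical.choose_spec (hex q)
    have hvols : ∀ q, ∀ h ∈ H, vol d (Classical.choose (hex q) ∘ h) = vol d (pbar ∘ h) := by
      intro q h hh
      rw [vols_of_pinned hn (hFv q).1 (hFv q).2 h, vols_of_pinned hn hpin hrel h,
        q.2 _ hbase, q.2 h hh]
    refine ⟨fun q => ⟨Classical.choose (hex q), (hFv q).1, hvols q⟩,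
      fun q => (hFv q).2, ?_, ?_⟩
    · -- surjective
      rintro ⟨r, hrpin, hrv⟩
      set c := vol d (p ∘ fun i => Fin.castLE hn i) with hc
      set C : Matrix (Fin d) (Fin d) ℝ :=
        Matrix.diagonal (fun k => if (k : ℕ) = 0 then c else 1) with hC
      have hdetC : C.det = c := by
        rw [hC, Matrix.det_diagonal]
        cases d with
        | zero =>
          have : c = 1 := vol_d_zero _
          simp [this]
        | succ d =>
          rw [Fin.prod_univ_succ]
          simp
      have hcne : c ≠ 0 := hvol
      set q' : Fin n → Fin d → ℝ := fun v => C.mulVec (r v) with hq'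
      have hvq' : ∀ t : Fin (d + 1) → Fin n, vol d (q' ∘ t) = c * vol d (r ∘ t) := by
        intro t
        have := vol_affine (A := C) (b := 0) (x := r ∘ t) (y := q' ∘ t)
          (fun i => by simp [hq'])
        rw [this, hdetC]
      have hmem : ∀ h ∈ H, vol d (q' ∘ h) = vol d (p ∘ h) := by
        intro h hh
        rw [hvq' h, hrv h hh, vols_of_pinned hn hpin hrel h, ← hc, ← mul_assoc,
          mul_inv_cancel₀ hcne, one_mul]
      refine ⟨⟨q', hmem⟩, ?_⟩
      apply Subtype.ext
      have haffr : AffImage d n q' r := by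
        refine ⟨C⁻¹, 0, fun v => ?_⟩
        have hCu : IsUnit C.det := isUnit_iff_ne_zero.mpr (by rw [hdetC]; exact hcne)
        rw [hq']
        simp only [Matrix.mulVec_mulVec, Matrix.nonsing_inv_mul C hCu, Matrix.one_mulVec,
          add_zero]
      exact pinned_unique hn (hFv _).1 (hFv _).2 hrpin haffr
    · -- injectivity criterion
      intro q q'
      constructor
      · intro hFe t
        have he : Classical.choose (hex q) = Classical.choose (hex q') :=
          congrArg Subtype.val hFe
        have e1 := vols_of_pinned hn (hFv q).1 (hFv q).2 t
        have e2 := vols_of_pinned hn (hFv q').1 (hFv q').2 t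
        rw [he, e2, q.2 _ hbase, q'.2 _ hbase] at e1
        exact mul_left_cancel₀ (inv_ne_zero hvol) e1.symm
      · intro hv
        apply Subtype.ext
        funext v j
        show Classical.choose (hex q) v j = Classical.choose (hex q') v j
        rw [← pinned_coord hn (hFv q).1 v j, ← pinned_coord hn (hFv q').1 v j,
          vols_of_pinned hn (hFv q).1 (hFv q).2, vols_of_pinned hn (hFv q').1 (hFv q').2,
          q.2 _ hbase, q'.2 _ hbase, hv (tv hn v j)]
end
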